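/- arXiv:0710.1153 — 2 statements merged into one kernel-verified Lean document; each statement's English description precedes it below -/
import Mathlib

section
/- For any weakly well-bracketed word l with s(l) ≥ 1 that begins with an opening bracket o, either s(l') ≥ 1 for every nonempty prefix l' of l, or there exists a decomposition l = o :: l₁ ++ (c :: l₂) such that o :: l₁ ++ [c] is well-bracketed. -/
/-- Bracket words over {open, close}: `true` = opening bracket, `false` = closing bracket. -/
def bsum : List Bool → ℤ
  | [] => 0
  | true :: l => 1 + bsum l
  | false :: l => -1 + bsum l

/-- Weakly well-bracketed: every prefix has nonnegative sum. -/
def WeaklyWB (l : List Bool) : Prop := ∀ l' : List Bool, l' <+: l → 0 ≤ bsum l'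

/-- Well-bracketed: weakly well-bracketed and total sum zero. -/
def WB (l : List Bool) : Prop := WeaklyWB l ∧ bsum l = 0

lemma bsum_append (a b : List Bool) : bsum (a ++ b) = bsum a + bsum b := by
  induction a with
  | nil => simp [bsum]
  | cons x t ih => cases x <;> simp [bsum, ih] <;> ring

theorem stmt_4 (l : List Bool) (hw : WeaklyWB (true :: l)) (hs : 1 ≤ bsum (true :: l)) :
    (∀ l' : List Bool, l' <+: (true :: l) → l' ≠ [] → 1 ≤ bsum l') ∨
    (∃ l₁ l₂ : List Bool, l = l₁ ++ (false :: l₂) ∧ WB (true :: (l₁ ++ [false]))) := by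
  by_cases h : ∀ l' : List Bool, l' <+: (true :: l) → l' ≠ [] → 1 ≤ bsum l'
  · exact Or.inl h
  · right
    push_neg at h
    obtain ⟨p, hp, hne, hlt⟩ := h
    have hz : bsum p = 0 := le_antisymm (by omega) (hw p hp)
    -- p = true :: q
    obtain ⟨b, q, rfl⟩ : ∃ b q, p = b :: q := by
      cases p with
      | nil => exact absurd rfl hne
      | cons b q => exact ⟨b, q, rfl⟩
    obtain ⟨hb, hq⟩ := List.cons_prefix_cons.mp hp
    subst hb
    -- q ≠ []
    have hqne : q ≠ [] := by
      rintro rfl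
      simp [bsum] at hz
    obtain ⟨l₁, a, rfl⟩ : ∃ l₁ a, q = l₁ ++ [a] := by
      rcases List.eq_nil_or_concat q with h | ⟨l₁, a, h⟩
      · exact absurd h hqne
      · exact ⟨l₁, a, by simpa [List.concat_eq_append] using h⟩
    have hsum : bsum (true :: l₁) + bsum [a] = 0 := by
      have := bsum_append (true :: l₁) [a]
      simp only [List.cons_append] at this
      omega
    have hpre : (true :: l₁) <+: (true :: l) := by
      refine List.IsPrefix.trans ?_ hp
      exact ⟨a :: [], by simp⟩
    have h1 : 0 ≤ bsum (true :: l₁) := hw _ hpre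
    have ha : a = false := by
      cases a
      · rfl
      · simp [bsum] at hsum h1; omega
    subst ha
    obtain ⟨l₂, hl₂⟩ := hq
    refine ⟨l₁, l₂, by simpa using hl₂.symm, ?_, hz⟩
    intro r hr
    exact hw r (hr.trans hp)
end

section
/- If a constraint system split as Const = Constᵇ ∪ Constⁱ ∪ Constᵐ (pure boolean, pure linear, and mixed constraints b=1→I) admits any solution (φᵇ, φⁱ), and ψᵇ is the minimal solution of Constᵇ, then (ψᵇ, φⁱ) is also a solution of Const. -/
/-- Boolean constraints over variables `V`, valued in `Bool` (`false` = 0, `true` = 1). -/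
inductive BConstr (V : Type) where
  | eq (i j : V)      -- bᵢ = bⱼ
  | one (i : V)       -- bᵢ = 1
  | zero (i : V)      -- bᵢ = 0
  | imp (i j : V)     -- bᵢ = 1 → bⱼ = 1

/-- Satisfaction of a boolean constraint by a valuation. -/
def BSat {V : Type} (φ : V → Bool) : BConstr V → Prop
  | .eq i j => φ i = φ j
  | .one i => φ i = true
  | .zero i => φ i = false
  | .imp i j => φ i = true → φ j = true


/-- A linear constraint over `n` integer variables: coefficients together with a flag
(`true` = equation `∑ aⱼ xⱼ = 0`, `false` = inequation `∑ aⱼ xⱼ ≥ 0`). -/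
def LinCon (n : ℕ) := (Fin n → ℤ) × Bool

def LHolds {n : ℕ} (x : Fin n → ℤ) (I : LinCon n) : Prop :=
  if I.2 then (∑ j, I.1 j * x j) = 0 else 0 ≤ ∑ j, I.1 j * x j

/-- If a split system Constᵇ ∪ Constⁱ ∪ Constᵐ has a solution (φᵇ, φⁱ) and ψᵇ is the
minimal solution of the boolean part, then (ψᵇ, φⁱ) is also a solution. -/
theorem stmt_11 {V : Type} {n : ℕ}
    (Cb : Set (BConstr V)) (Ci : Set (LinCon n)) (Cm : Set (V × LinCon n))
    (φb : V → Bool) (φi : Fin n → ℤ)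
    (hb : ∀ c ∈ Cb, BSat φb c) (hi : ∀ I ∈ Ci, LHolds φi I)
    (hm : ∀ p ∈ Cm, φb p.1 = true → LHolds φi p.2)
    (ψb : V → Bool) (hψ : ∀ c ∈ Cb, BSat ψb c)
    (hmin : ∀ χ : V → Bool, (∀ c ∈ Cb, BSat χ c) → ∀ v, ψb v ≤ χ v) :
    (∀ c ∈ Cb, BSat ψb c) ∧ (∀ I ∈ Ci, LHolds φi I) ∧
    (∀ p ∈ Cm, ψb p.1 = true → LHolds φi p.2) := ⟨hψ, hi, fun p hp ht => hm p hp (by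
    have := hmin φb hb p.1
    rw [ht] at this
    exact (Bool.le_iff_imp.mp this rfl))⟩
end
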